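/- arXiv:1703.04756 — 3 statements merged into one kernel-verified Lean document; each statement's English description precedes it below -/
import Mathlib

section
/- Let f be a deterministic anonymous voting rule that is not constant on unanimous profiles, with n ≥ 2 voters. Then for any deterministic weighting scheme there exists a sequence of vote profiles and loss functions of length T such that the regret of the scheme is at least T/n. -/
/-!
Let voter `0` rank `τ` and every other voter rank `τ'`, where `f` elects different alternatives
`a ≠ a'` on the unanimous profiles of `τ` and `τ'`. The adversary keeps this profile and, knowing
the scheme's weights, puts loss `1` on the alternative that `f` elects, so the scheme loses `T`.
Experts `0` and `1` always elect `a` and `a'`, which never both carry loss, so one of them loses at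
most `T / 2 ≤ T - T / n`.
-/

open Finset

attribute [local instance] Classical.propDecidable

/-- Rankings (linear orders) over `m` alternatives, as permutations of `Fin m`;
`σ a` is the position of alternative `a` (position `0` is the top). -/
abbrev Rk (m : ℕ) := Equiv.Perm (Fin m)

/-- `π` is a distribution (an anonymous vote profile when defined on rankings). -/
def IsDist {α : Type*} [Fintype α] (π : α → ℝ) : Prop :=
  (∀ x, 0 ≤ π x) ∧ ∑ x, π x = 1

/-- The anonymous vote profile induced by weights `w` on vote profile `σ`:
`π_τ` is the fraction of the total weight placed on ranking `τ`. -/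
noncomputable def anonProfile {n m : ℕ} (σ : Fin n → Rk m) (w : Fin n → ℝ) :
    Rk m → ℝ :=
  fun τ => (∑ i, if σ i = τ then w i else 0) / (∑ i, w i)

/-- Expected loss of the alternative chosen by rule `f` on profile `π`
under loss vector `ℓ`: `L_f(π, ℓ) = f(π)·ℓ`. -/
noncomputable def expLoss {m : ℕ} (f : (Rk m → ℝ) → Fin m → ℝ)
    (π : Rk m → ℝ) (ℓ : Fin m → ℝ) : ℝ :=
  ∑ a, f π a * ℓ a

/-- The unanimous anonymous profile placing all weight on ranking `τ`. -/
noncomputable def unan {m : ℕ} (τ : Rk m) : Rk m → ℝ :=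
  fun σ => if σ = τ then 1 else 0

/-- The history available to the weighting scheme at time `t`: the vote profiles
and loss vectors of all previous rounds `s < t`. -/
def hist {n m T : ℕ} (σ : Fin T → Fin n → Rk m) (ℓ : Fin T → Fin m → ℝ) (t : Fin T) :
    List ((Fin n → Rk m) × (Fin m → ℝ)) :=
  ((List.finRange T).take t.1).map fun s => (σ s, ℓ s)

def adaptiveHist {α β : Type*} (next : List (α × β) → α × β) : ℕ → List (α × β)
  | 0 => []
  | k + 1 => adaptiveHist next k ++ [next (adaptiveHist next k)]

theorem hist_adaptiveHist {n m T : ℕ}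
    (next : List ((Fin n → Rk m) × (Fin m → ℝ)) → (Fin n → Rk m) × (Fin m → ℝ)) (t : Fin T) :
    hist (fun s => (next (adaptiveHist next s)).1) (fun s => (next (adaptiveHist next s)).2) t
      = adaptiveHist next t := by
  suffices h : ∀ k ≤ T,
      ((List.finRange T).take k).map (fun s : Fin T => next (adaptiveHist next s)) =
        adaptiveHist next k from h t t.2.le
  intro k hk
  induction k with
  | zero => simp [adaptiveHist]
  | succ k ih =>
    have hkT : (List.finRange T)[k]? = some ⟨k, hk⟩ := by
      rw [List.getElem?_eq_getElem (by simpa using hk)]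
      simp
    rw [List.take_add_one, hkT, List.map_append, ih (by omega)]
    simp [adaptiveHist]

theorem expLoss_eq_apply_of_eq_single {m : ℕ} {f : (Rk m → ℝ) → Fin m → ℝ} {π : Rk m → ℝ}
    {a : Fin m} (h : f π = Pi.single a 1) (ℓ : Fin m → ℝ) : expLoss f π ℓ = ℓ a := by
  simp [expLoss, h, Pi.single_apply]

theorem anonProfile_single_one {n m : ℕ} (σ : Fin n → Rk m) (i : Fin n) :
    anonProfile σ (Pi.single i 1) = unan (σ i) := by
  funext τ
  simp only [anonProfile, unan, Pi.single_apply, Finset.sum_ite_eq', Finset.mem_univ,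
    if_true]
  rw [Finset.sum_eq_single i (by simp +contextual) (by simp)]
  simp [eq_comm]

theorem single_one_apply_mem_Icc {ι : Type*} [DecidableEq ι] (b a : ι) :
    (Pi.single b (1 : ℝ) : ι → ℝ) a ∈ Set.Icc 0 1 := by
  rcases eq_or_ne a b with rfl | h <;> simp [*]

theorem sum_single_one_apply_add_sum_le_card {ι κ : Type*} [DecidableEq ι] [Fintype κ]
    {a a' : ι} (h : a ≠ a') (b : κ → ι) :
    ∑ t, (Pi.single (b t) (1 : ℝ) : ι → ℝ) a + ∑ t, (Pi.single (b t) (1 : ℝ) : ι → ℝ) a' ≤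
      Fintype.card κ := by
  rw [← Finset.sum_add_distrib, Fintype.card_eq_sum_ones, Nat.cast_sum, Nat.cast_one]
  refine Finset.sum_le_sum fun t _ => ?_
  simp only [Pi.single_apply]
  split_ifs <;> grind

theorem inf'_le_half_of_add_le {ι : Type*} {s : Finset ι} (hs : s.Nonempty) {G : ι → ℝ}
    {i j : ι} (hi : i ∈ s) (hj : j ∈ s) {c : ℝ} (h : G i + G j ≤ c) :
    s.inf' hs G ≤ c / 2 := by
  linarith [s.inf'_le G hi, s.inf'_le G hj]

/-- If a deterministic voting rule `f` is not constant on unanimous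
profiles and there are `n ≥ 2` voters, then for every deterministic weighting scheme `W`
there is an adversarial sequence of vote profiles and loss functions (with losses in
`[0,1]`) of length `T` on which the scheme's regret is at least `T/n`. -/
theorem deterministic_rule_linear_regret (n m T : ℕ) (hn : 2 ≤ n)
    (f : (Rk m → ℝ) → Fin m → ℝ)
    (hdet : ∀ π, ∃ a, f π = Pi.single a 1)
    (hnonconst : ∃ τ τ' : Rk m, f (unan τ) ≠ f (unan τ'))
    (W : List ((Fin n → Rk m) × (Fin m → ℝ)) → Fin n → ℝ) :
    ∃ (σ : Fin T → Fin n → Rk m) (ℓ : Fin T → Fin m → ℝ),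
      (∀ t a, ℓ t a ∈ Set.Icc (0 : ℝ) 1) ∧
      (T : ℝ) / (n : ℝ) ≤
        (∑ t, expLoss f (anonProfile (σ t) (W (hist σ ℓ t))) (ℓ t))
          - Finset.univ.inf'
              (Finset.univ_nonempty_iff.mpr (Fin.pos_iff_nonempty.mp (by omega)))
              (fun i => ∑ t, expLoss f (anonProfile (σ t) (Pi.single i 1)) (ℓ t)) := by
  obtain ⟨τ, τ', hττ'⟩ := hnonconst
  choose elect helect using hdet
  have hne : elect (unan τ) ≠ elect (unan τ') := fun h => hττ' (by rw [helect, helect, h])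
  let v₀ : Fin n := ⟨0, by omega⟩
  let v₁ : Fin n := ⟨1, by omega⟩
  let σ₀ : Fin n → Rk m := Function.update (fun _ => τ') v₀ τ
  let next := fun h => (σ₀, (Pi.single (elect (anonProfile σ₀ (W h))) 1 : Fin m → ℝ))
  let elected (t : Fin T) : Fin m := elect (anonProfile σ₀ (W (adaptiveHist next t)))
  let ℓ (t : Fin T) : Fin m → ℝ := Pi.single (elected t) 1
  refine ⟨fun _ => σ₀, ℓ, fun t a => single_one_apply_mem_Icc _ a, ?_⟩
  have hhist (t : Fin T) : hist (fun _ => σ₀) ℓ t = adaptiveHist next t := hist_adaptiveHist next t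
  have hscheme : ∑ t, expLoss f (anonProfile σ₀ (W (hist (fun _ => σ₀) ℓ t))) (ℓ t) = T := by
    simp [hhist, expLoss_eq_apply_of_eq_single (helect _), ℓ, elected]
  have hexpert (i : Fin n) :
      ∑ t, expLoss f (anonProfile σ₀ (Pi.single i 1)) (ℓ t) = ∑ t, ℓ t (elect (unan (σ₀ i))) := by
    simp only [anonProfile_single_one, expLoss_eq_apply_of_eq_single (helect _)]
  have hσ₀ : σ₀ v₀ = τ ∧ σ₀ v₁ = τ' := by simp [σ₀, v₀, v₁]
  have hmin := inf'_le_half_of_add_le (G := fun i => ∑ t, ℓ t (elect (unan (σ₀ i)))) (c := T)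
    ⟨v₀, Finset.mem_univ _⟩ (Finset.mem_univ v₀) (Finset.mem_univ v₁)
    (by simpa only [hσ₀, Fintype.card_fin] using
      sum_single_one_apply_add_sum_le_card hne elected)
  have hTn : (T : ℝ) / n ≤ T / 2 :=
    div_le_div_of_nonneg_left (by positivity) two_pos (by exact_mod_cast hn)
  beta_reduce
  simp only [hscheme, hexpert]
  linarith
end

section
/- Let w ∈ ℝ_{≥0}^n with ||w||_1 > 0, sort the weights in non-increasing order, and let N_1 be a shortest prefix of the sorted voters whose total weight W_1 exceeds ||w||_1/2. If W_1 ≥ (1/2 + δ/3)||w||_1 for some δ ∈ (0, 3/2], then |N_1| ≤ 3/(2δ) + 1. -/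
/-! Every voter of the shortest heavy prefix outweighs its last voter `w j`, which carries at
least `W₁ - ‖w‖₁/2 ≥ (δ/3)‖w‖₁`; the `j` voters before it weigh at most `‖w‖₁/2` in total,
so `j · (δ/3)‖w‖₁ ≤ ‖w‖₁/2`. -/

open Finset

theorem nsmul_le_sum_range_of_le {M : Type*} [AddCommMonoid M] [PartialOrder M]
    [IsOrderedAddMonoid M] (w : ℕ → M) (j : ℕ) (hle : ∀ i < j, w j ≤ w i) :
    j • w j ≤ ∑ i ∈ range j, w i := by
  simpa using card_nsmul_le_sum (range j) w (w j) fun i hi => hle i (mem_range.mp hi)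

theorem greedy_prefix_size_bound_general (n k : ℕ) (hk : k ≤ n) (w : ℕ → ℝ)
    (hsorted : ∀ i j, i ≤ j → j < n → w j ≤ w i)
    (htot : 0 < ∑ i ∈ Finset.range n, w i)
    (δ : ℝ) (hδ : 0 < δ)
    (hshortest : ∀ j, j < k →
      ∑ i ∈ Finset.range j, w i ≤ (∑ i ∈ Finset.range n, w i) / 2)
    (hW₁ : (1 / 2 + δ / 3) * ∑ i ∈ Finset.range n, w i
      ≤ ∑ i ∈ Finset.range k, w i) :
    (k : ℝ) ≤ 3 / (2 * δ) + 1 := by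
  set T := ∑ i ∈ range n, w i
  rcases k with _ | j
  · simp only [CharP.cast_eq_zero]; positivity
  have hbefore : ∑ i ∈ range j, w i ≤ T / 2 := hshortest j j.lt_succ_self
  have hlast : δ / 3 * T ≤ w j := by rw [sum_range_succ] at hW₁; linarith
  have hprefix : (j : ℝ) * w j ≤ T / 2 := by
    have hsum := nsmul_le_sum_range_of_le w j fun i hi => hsorted i j hi.le (by omega)
    rw [nsmul_eq_mul] at hsum
    exact hsum.trans hbefore
  have hj : (j : ℝ) * (δ / 3 * T) ≤ T / 2 :=
    (mul_le_mul_of_nonneg_left hlast j.cast_nonneg).trans hprefix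
  have hj' : (j : ℝ) ≤ 3 / (2 * δ) := by
    rw [le_div_iff₀ (by positivity)]
    exact le_of_mul_le_mul_right (by linarith) htot
  push_cast
  linarith

/-- Let `w` be nonnegative weights sorted in non-increasing order
over `n` voters with positive total weight, and let the first `k` voters be a shortest
prefix whose total weight `W₁` exceeds half the total. If
`W₁ ≥ (1/2 + δ/3)·‖w‖₁` for some `δ ∈ (0, 3/2]`, then `k ≤ 3/(2δ) + 1`. -/
theorem greedy_prefix_size_bound (n k : ℕ) (hk : k ≤ n) (w : ℕ → ℝ)
    (hw : ∀ i, i < n → 0 ≤ w i)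
    (hsorted : ∀ i j, i ≤ j → j < n → w j ≤ w i)
    (htot : 0 < ∑ i ∈ Finset.range n, w i)
    (δ : ℝ) (hδ : 0 < δ) (hδ' : δ ≤ 3 / 2)
    (hover : (∑ i ∈ Finset.range n, w i) / 2 < ∑ i ∈ Finset.range k, w i)
    (hshortest : ∀ j, j < k →
      ∑ i ∈ Finset.range j, w i ≤ (∑ i ∈ Finset.range n, w i) / 2)
    (hW₁ : (1 / 2 + δ / 3) * ∑ i ∈ Finset.range n, w i
      ≤ ∑ i ∈ Finset.range k, w i) :
    (k : ℝ) ≤ 3 / (2 * δ) + 1 :=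
  greedy_prefix_size_bound_general n k hk w hsorted htot δ hδ hshortest hW₁
end

section
/- Let f be a probabilistically Condorcet consistent voting rule with gap δ(m) over m alternatives, and let n ≥ 2(3/(2δ(m)) + 1). Then for any deterministic weighting scheme there exists an adversarial sequence of vote profiles and loss functions over T rounds such that the regret is at least T·δ(m)/6. -/
open Finset

attribute [local instance] Classical.propDecidable

/-- Total fraction of weight in `π` preferring `a` to `b`. -/
noncomputable def prefW {m : ℕ} (π : Rk m → ℝ) (a b : Fin m) : ℝ :=
  ∑ σ : Rk m, if σ a < σ b then π σ else 0

/-- `a` beats `b` in a pairwise majority contest under `π`. -/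
def Beats {m : ℕ} (π : Rk m → ℝ) (a b : Fin m) : Prop := 1 / 2 < prefW π a b

/-- `a` ties `b` in a pairwise majority contest under `π`. -/
def TiesW {m : ℕ} (π : Rk m → ℝ) (a b : Fin m) : Prop := prefW π a b = 1 / 2

/-- The Copeland score of alternative `a` under profile `π`. -/
noncomputable def cscore {m : ℕ} (π : Rk m → ℝ) (a : Fin m) : ℝ :=
  ((Finset.univ.filter fun b => b ≠ a ∧ Beats π a b).card : ℝ)
    + (1 / 2) * ((Finset.univ.filter fun b => b ≠ a ∧ TiesW π a b).card : ℝ)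

/-- `a` is a Condorcet winner in `π`. -/
def CondorcetWinner {m : ℕ} (π : Rk m → ℝ) (a : Fin m) : Prop :=
  ∀ b, b ≠ a → Beats π a b

/-- `f` is probabilistically Condorcet consistent with gap `δ`: whenever `a` is a
Condorcet winner, `f(π)_a ≥ f(π)_x + δ` for every other alternative `x`. -/
def ProbCondorcetConsistent {m : ℕ} (f : (Rk m → ℝ) → Fin m → ℝ) (δ : ℝ) : Prop :=
  ∀ π : Rk m → ℝ, IsDist π → ∀ a, CondorcetWinner π a →
    ∀ x, x ≠ a → f π x + δ ≤ f π a

/-!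
The adversary fixes two alternatives `a ≠ b`, rankings `A`, `B` with `a`, resp. `b`, on top, and
in every round the loss `1` on `a`, `0` on `b` and `1/2` elsewhere. In each round the `⌊(n-1)/2⌋`
voters of least current weight vote `B` and all others vote `A`. Then `A` carries more than half
of the weight, so `a` is a Condorcet winner of the weighted profile and the learner pays at least
`(1 + δ)/2`. A single voter induces a point mass; exchanging `(a, A)` with `(b, B)` if necessary,
the point masses on `A` and `B` give `a` a combined advantage `≤ 0` over `b`. Pairing minority
voters with majority voters, the average voter then pays at most `1/2 + 1/n ≤ 1/2 + δ/3`. The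
best voter does no worse than the average, so every round adds at least `δ/6` to the regret.
-/

lemma IsDist.le_one {α : Type*} [Fintype α] {p : α → ℝ} (hp : IsDist p) (x : α) : p x ≤ 1 :=
  hp.2 ▸ single_le_sum (fun y _ => hp.1 y) (mem_univ x)

lemma exists_card_eq_mul_sum_le {ι : Type*} [Fintype ι] (w : ι → ℝ) {r : ℕ}
    (hr : r ≤ Fintype.card ι) :
    ∃ K : Finset ι, #K = r ∧ Fintype.card ι * ∑ i ∈ K, w i ≤ r * ∑ i, w i := by
  induction r with
  | zero => exact ⟨∅, by simp⟩
  | succ r ih =>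
    obtain ⟨K, hKcard, hK⟩ := ih (by omega)
    have hKc : Kᶜ.Nonempty := by
      rw [← card_pos, card_compl]; omega
    obtain ⟨j, hj, hjmin⟩ := exists_min_image Kᶜ w hKc
    refine ⟨insert j K, by rw [card_insert_of_notMem (mem_compl.mp hj), hKcard], ?_⟩
    have hcard : (#Kᶜ : ℝ) = Fintype.card ι - r := by
      rw [card_compl, hKcard, Nat.cast_sub (by omega)]
    have hlight : (Fintype.card ι - r) * w j ≤ ∑ i, w i - ∑ i ∈ K, w i := by
      rw [← hcard, ← sum_compl_add_sum K w, add_sub_cancel_right, ← nsmul_eq_mul]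
      exact card_nsmul_le_sum _ _ _ hjmin
    have hr' : (r : ℝ) + 1 ≤ Fintype.card ι := by exact_mod_cast hr
    rw [sum_insert (mem_compl.mp hj)]
    push_cast
    nlinarith [mul_nonneg (sub_nonneg.mpr hr') (sub_nonneg.mpr hK)]

lemma le_sum_sub_inf'_of_forall_le {κ ι : Type*} [Fintype κ] [Fintype ι]
    (H : (univ : Finset ι).Nonempty) (L : κ → ℝ) (E : κ → ι → ℝ) {c : ℝ}
    (h : ∀ t, c ≤ L t - (∑ i, E t i) / Fintype.card ι) :
    Fintype.card κ * c ≤ ∑ t, L t - univ.inf' H (fun i => ∑ t, E t i) := by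
  have hcard : (0 : ℝ) < Fintype.card ι := by exact_mod_cast card_pos.mpr H
  have hmin : univ.inf' H (fun i => ∑ t, E t i) ≤ ∑ t, (∑ i, E t i) / Fintype.card ι := by
    rw [← sum_div, sum_comm, le_div_iff₀ hcard, mul_comm, ← nsmul_eq_mul]
    exact card_nsmul_le_sum _ _ _ fun i _ => inf'_le _ (mem_univ i)
  calc (Fintype.card κ : ℝ) * c = ∑ _t : κ, c := by simp
    _ ≤ ∑ t, (L t - (∑ i, E t i) / Fintype.card ι) := sum_le_sum fun t _ => h t
    _ ≤ ∑ t, L t - univ.inf' H (fun i => ∑ t, E t i) := by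
      rw [sum_sub_distrib]; linarith

lemma sum_comp_ite_mem {ι β : Type*} [Fintype ι] (K : Finset ι) [DecidablePred (· ∈ K)]
    (A B : β) (g : β → ℝ) :
    ∑ i, g (if i ∈ K then B else A) = #K * g B + (Fintype.card ι - #K) * g A := by
  simp [sum_apply_ite, ← compl_eq_univ_sdiff, filter_not, card_compl,
    Nat.cast_sub (card_le_univ K)]

def playHistory {α : Type*} (step : List α → α) : ℕ → List α
  | 0 => []
  | t + 1 => playHistory step t ++ [step (playHistory step t)]

lemma exists_eq_step_take_finRange {α : Type*} (T : ℕ) (step : List α → α) :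
    ∃ u : Fin T → α, ∀ t : Fin T, u t = step (((List.finRange T).take t).map u) := by
  let u : Fin T → α := fun t => step (playHistory step t)
  have hu : ∀ k ≤ T, ((List.finRange T).take k).map u = playHistory step k := by
    intro k hk
    induction k with
    | zero => simp [playHistory]
    | succ k ih =>
      rw [List.take_add_one, List.map_append, ih (by omega), playHistory,
        List.getElem?_eq_getElem (by simpa using hk)]
      simp [u]
  exact ⟨u, fun t => by rw [hu t t.2.le]⟩

lemma exists_top_rank {m : ℕ} (a : Fin m) : ∃ A : Rk m, ∀ x, x ≠ a → A a < A x := by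
  refine ⟨Equiv.swap a ⟨0, a.pos⟩, fun x hx => ?_⟩
  have hx0 : Equiv.swap a ⟨0, a.pos⟩ x ≠ ⟨0, a.pos⟩ := by
    rwa [Ne, Equiv.swap_apply_eq_iff, Equiv.swap_apply_right]
  rw [Equiv.swap_apply_left, Fin.lt_def]
  exact Nat.pos_of_ne_zero fun h => hx0 (Fin.ext h)

lemma condorcetWinner_of_half_lt {m : ℕ} {π : Rk m → ℝ} (hπ : ∀ τ, 0 ≤ π τ) {A : Rk m}
    {a : Fin m} (hA : ∀ x, x ≠ a → A a < A x) (h : 1 / 2 < π A) : CondorcetWinner π a := by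
  intro x hx
  refine h.trans_le ?_
  have := single_le_sum (fun τ _ => ?_) (mem_univ A) (f := fun τ => if τ a < τ x then π τ else 0)
  · simpa [prefW, hA x hx] using this
  · split_ifs <;> simp [hπ]

lemma isDist_anonProfile {n m : ℕ} (σ : Fin n → Rk m) {w : Fin n → ℝ} (hw : ∀ i, 0 ≤ w i)
    (hpos : 0 < ∑ i, w i) : IsDist (anonProfile σ w) := by
  refine ⟨fun τ => div_nonneg (sum_nonneg fun i _ => ?_) hpos.le, ?_⟩
  · split_ifs <;> simp [hw]
  · simp only [anonProfile, ← sum_div, sum_comm (γ := Rk m), sum_ite_eq, mem_univ, if_true]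
    exact div_self hpos.ne'

lemma anonProfile_single {n m : ℕ} (σ : Fin n → Rk m) (i : Fin n) :
    anonProfile σ (Pi.single i 1) = Pi.single (σ i) 1 := by
  funext τ
  rw [anonProfile, sum_eq_single i (fun j _ hj => by simp [hj]) (by simp)]
  simp [Pi.single_apply, eq_comm]

lemma sum_compl_div_le_anonProfile {n m : ℕ} {σ : Fin n → Rk m} {w : Fin n → ℝ}
    (hw : ∀ i, 0 ≤ w i) {K : Finset (Fin n)} {A : Rk m} (hA : ∀ i, i ∉ K → σ i = A) :
    (∑ i ∈ Kᶜ, w i) / ∑ i, w i ≤ anonProfile σ w A := by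
  refine div_le_div_of_nonneg_right ?_ (sum_nonneg fun i _ => hw i)
  rw [← sum_filter]
  exact sum_le_sum_of_subset_of_nonneg (fun i hi => by simpa using hA i (by simpa using hi))
    (fun i _ _ => hw i)

noncomputable def pairLoss {m : ℕ} (a b : Fin m) : Fin m → ℝ :=
  fun x => (1 + (if x = a then 1 else 0) - (if x = b then 1 else 0)) / 2

lemma pairLoss_mem_Icc {m : ℕ} (a b x : Fin m) : pairLoss a b x ∈ Set.Icc (0 : ℝ) 1 := by
  simp only [pairLoss]
  constructor <;> split_ifs <;> norm_num

lemma expLoss_pairLoss {m : ℕ} (f : (Rk m → ℝ) → Fin m → ℝ) (π : Rk m → ℝ) (a b : Fin m)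
    (hf : ∑ x, f π x = 1) : expLoss f π (pairLoss a b) = (1 + f π a - f π b) / 2 := by
  simp only [expLoss, pairLoss, mul_div_assoc', ← sum_div, mul_sub, mul_add, mul_one, mul_ite,
    mul_zero, sum_add_distrib, sum_sub_distrib, hf, sum_ite_eq', mem_univ, if_true]

lemma le_expLoss_pairLoss_of_half_lt {m : ℕ} {f : (Rk m → ℝ) → Fin m → ℝ}
    (hf : ∀ π, IsDist (f π)) {δ : ℝ} (hPCC : ProbCondorcetConsistent f δ) {π : Rk m → ℝ}
    (hπ : IsDist π) {a b : Fin m} (hab : a ≠ b) {A : Rk m} (hA : ∀ x, x ≠ a → A a < A x)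
    (hmaj : 1 / 2 < π A) : (1 + δ) / 2 ≤ expLoss f π (pairLoss a b) := by
  have := hPCC π hπ a (condorcetWinner_of_half_lt hπ.1 hA hmaj) b hab.symm
  rw [expLoss_pairLoss f π a b (hf π).2]
  linarith

lemma div_six_le_round_regret {n m : ℕ} {f : (Rk m → ℝ) → Fin m → ℝ}
    (hf : ∀ π, IsDist (f π)) {δ : ℝ} (hPCC : ProbCondorcetConsistent f δ) (hnδ : 3 ≤ n * δ)
    {a b : Fin m} (hab : a ≠ b) {A B : Rk m} (hA : ∀ x, x ≠ a → A a < A x)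
    (hsign : (f (Pi.single A 1) a - f (Pi.single A 1) b)
      + (f (Pi.single B 1) a - f (Pi.single B 1) b) ≤ 0)
    {w : Fin n → ℝ} (hw : ∀ i, 0 ≤ w i) (hpos : 0 < ∑ i, w i) {K : Finset (Fin n)}
    (hK : #K = (n - 1) / 2) (hKw : n * ∑ i ∈ K, w i ≤ #K * ∑ i, w i) :
    δ / 6 ≤ expLoss f (anonProfile (fun i => if i ∈ K then B else A) w) (pairLoss a b)
      - (∑ i, expLoss f (anonProfile (fun i => if i ∈ K then B else A) (Pi.single i 1))
          (pairLoss a b)) / n := by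
  set σ : Fin n → Rk m := fun i => if i ∈ K then B else A
  have hn : 0 < n := Nat.pos_of_ne_zero fun h => by simp [h] at hnδ; linarith
  have hKn : (n : ℝ) ≤ 2 * #K + 2 ∧ 2 * (#K : ℝ) + 1 ≤ n := by
    constructor <;> norm_cast <;> omega
  have hmaj : 1 / 2 < anonProfile σ w A := by
    refine lt_of_lt_of_le ?_ (sum_compl_div_le_anonProfile hw (fun i hi => if_neg hi))
    have hlight : (n : ℝ) * (2 * ∑ i ∈ K, w i) < n * ∑ i, w i := by
      nlinarith [mul_le_mul_of_nonneg_right hKn.2 hpos.le]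
    have hsplit := sum_add_sum_compl K w
    rw [lt_div_iff₀ hpos]
    linarith [lt_of_mul_lt_mul_left hlight (Nat.cast_nonneg n)]
  have hlearner :=
    le_expLoss_pairLoss_of_half_lt hf hPCC (isDist_anonProfile σ hw hpos) hab hA hmaj
  have hexperts : ∑ i, expLoss f (anonProfile σ (Pi.single i 1)) (pairLoss a b)
      = #K * ((1 + f (Pi.single B 1) a - f (Pi.single B 1) b) / 2)
        + (n - #K) * ((1 + f (Pi.single A 1) a - f (Pi.single A 1) b) / 2) := by
    simp only [anonProfile_single, σ]
    rw [sum_comp_ite_mem K A B fun τ => expLoss f (Pi.single τ 1 : Rk m → ℝ) (pairLoss a b)]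
    simp only [expLoss_pairLoss f _ a b (hf _).2, Fintype.card_fin]
  have hαle : f (Pi.single A 1) a - f (Pi.single A 1) b ≤ 1 := by
    linarith [(hf (Pi.single A 1)).le_one a, (hf (Pi.single A 1)).1 b]
  have hS : ∑ i, expLoss f (anonProfile σ (Pi.single i 1)) (pairLoss a b) ≤ n / 2 + 1 := by
    rw [hexperts]
    nlinarith [mul_nonpos_of_nonneg_of_nonpos (Nat.cast_nonneg #K) hsign,
      mul_le_mul_of_nonneg_left hαle (by linarith : (0 : ℝ) ≤ n - 2 * #K)]
  have hSn : (∑ i, expLoss f (anonProfile σ (Pi.single i 1)) (pairLoss a b)) / n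
      ≤ 1 / 2 + δ / 3 := by
    rw [div_le_iff₀ (by exact_mod_cast hn)]
    linarith
  linarith

theorem exists_adversary_of_gap_sum_nonpos {n m : ℕ} (T : ℕ) {f : (Rk m → ℝ) → Fin m → ℝ}
    (hf : ∀ π, IsDist (f π)) {δ : ℝ} (hPCC : ProbCondorcetConsistent f δ) (hnδ : 3 ≤ n * δ)
    (W : List ((Fin n → Rk m) × (Fin m → ℝ)) → Fin n → ℝ)
    (hW : ∀ h, (∀ i, 0 ≤ W h i) ∧ 0 < ∑ i, W h i) (H : (univ : Finset (Fin n)).Nonempty)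
    {a b : Fin m} (hab : a ≠ b) {A B : Rk m} (hA : ∀ x, x ≠ a → A a < A x)
    (hsign : (f (Pi.single A 1) a - f (Pi.single A 1) b)
      + (f (Pi.single B 1) a - f (Pi.single B 1) b) ≤ 0) :
    ∃ (σ : Fin T → Fin n → Rk m) (ℓ : Fin T → Fin m → ℝ),
      (∀ t x, ℓ t x ∈ Set.Icc (0 : ℝ) 1) ∧
      (T : ℝ) * δ / 6 ≤
        (∑ t, expLoss f (anonProfile (σ t) (W (hist σ ℓ t))) (ℓ t))
          - univ.inf' H (fun i => ∑ t, expLoss f (anonProfile (σ t) (Pi.single i 1)) (ℓ t)) := by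
  choose K hKcard hKw using fun h =>
    exists_card_eq_mul_sum_le (W h) (r := (n - 1) / 2) (by simp only [Fintype.card_fin]; omega)
  obtain ⟨u, hu⟩ := exists_eq_step_take_finRange T fun h =>
    ((fun i => if i ∈ K h then B else A), pairLoss a b)
  refine ⟨fun t => (u t).1, fun t => (u t).2,
    fun t x => by simp only [hu t, pairLoss_mem_Icc], ?_⟩
  have hround : ∀ t, δ / 6 ≤
      expLoss f (anonProfile (u t).1 (W (((List.finRange T).take t).map u))) (u t).2
        - (∑ i, expLoss f (anonProfile (u t).1 (Pi.single i 1)) (u t).2)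
          / Fintype.card (Fin n) := by
    intro t
    rw [hu t, Fintype.card_fin]
    set h := ((List.finRange T).take t).map u
    exact div_six_le_round_regret hf hPCC hnδ hab hA hsign (hW h).1 (hW h).2 (hKcard h)
      (by simpa [hKcard h] using hKw h)
  have := le_sum_sub_inf'_of_forall_le H _ _ hround
  rwa [Fintype.card_fin, ← mul_div_assoc] at this

/-- If `f` is probabilistically Condorcet consistent with gap `δ`
over `m` alternatives and `n ≥ 2(3/(2δ) + 1)`, then every deterministic weighting
scheme `W` admits an adversarial sequence of vote profiles and loss functions (with
losses in `[0,1]`) over `T` rounds forcing regret at least `T·δ/6`. -/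
theorem prob_condorcet_linear_regret (n m T : ℕ) (hm : 2 ≤ m)
    (f : (Rk m → ℝ) → Fin m → ℝ) (hf : ∀ π, IsDist (f π))
    (δ : ℝ) (hδ : 0 < δ) (hPCC : ProbCondorcetConsistent f δ)
    (hn : 2 * (3 / (2 * δ) + 1) ≤ (n : ℝ))
    (W : List ((Fin n → Rk m) × (Fin m → ℝ)) → Fin n → ℝ)
    (hW : ∀ h, (∀ i, 0 ≤ W h i) ∧ 0 < ∑ i, W h i) :
    ∃ (σ : Fin T → Fin n → Rk m) (ℓ : Fin T → Fin m → ℝ),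
      (∀ t x, ℓ t x ∈ Set.Icc (0 : ℝ) 1) ∧
      (T : ℝ) * δ / 6 ≤
        (∑ t, expLoss f (anonProfile (σ t) (W (hist σ ℓ t))) (ℓ t))
          - Finset.univ.inf'
              (Finset.univ_nonempty_iff.mpr (Fin.pos_iff_nonempty.mp (by
                have h0 : (0 : ℝ) < 3 / (2 * δ) := by positivity
                have h1 : (0 : ℝ) < (n : ℝ) := by nlinarith
                exact_mod_cast h1)))
              (fun i => ∑ t, expLoss f (anonProfile (σ t) (Pi.single i 1)) (ℓ t)) := by
  have hnδ : 3 ≤ n * δ := by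
    have h3 : 3 / δ + 2 ≤ n := by
      rwa [show 2 * (3 / (2 * δ) + 1) = 3 / δ + 2 by field_simp] at hn
    rw [div_add' _ _ _ hδ.ne', div_le_iff₀ hδ] at h3
    linarith
  set a : Fin m := ⟨0, by omega⟩
  set b : Fin m := ⟨1, by omega⟩
  have hab : a ≠ b := by simp [a, b, Fin.ext_iff]
  obtain ⟨A, hA⟩ := exists_top_rank a
  obtain ⟨B, hB⟩ := exists_top_rank b
  rcases le_total ((f (Pi.single A 1) a - f (Pi.single A 1) b)
      + (f (Pi.single B 1) a - f (Pi.single B 1) b)) 0 with hsign | hsign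
  · exact exists_adversary_of_gap_sum_nonpos T hf hPCC hnδ W hW _ hab hA hsign
  · exact exists_adversary_of_gap_sum_nonpos T hf hPCC hnδ W hW _ hab.symm hB
      (B := A) (by linarith)
end
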